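/- arXiv:2502.21294 — 5 statements merged into one kernel-verified Lean document; each statement's English description precedes it below -/
import Mathlib

section
/- Let K be a finite abstract simplicial complex, v a vertex of K, and k ≥ 1. Then β_k(K) ≤ β_k(K − v) + β_{k−1}(lk_K(v)), where K − v is the subcomplex of all simplices of K not containing v, and lk_K(v) = {τ ∈ K : v ∉ τ and τ ∪ {v} ∈ K} is the link of v in K. -/
open Finset

/-- A finite abstract simplicial complex on vertex type `V`, including the empty simplex
(so that the associated chain complex is the augmented one and homology is reduced). -/
structure SimpComplex (V : Type) where
  faces : Finset (Finset V)
  empty_mem : ∅ ∈ faces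
  down_closed : ∀ ⦃s t : Finset V⦄, s ∈ faces → t ⊆ s → t ∈ faces

variable {V : Type} [Fintype V] [LinearOrder V]

/-- The coefficient of the (oriented) simplex `t` in the boundary of the simplex `s`,
using the linear order on the vertices to orient simplices. -/
def bdryCoeff (s t : Finset V) : ℤ :=
  ∑ v ∈ s, if s.erase v = t then (-1 : ℤ) ^ (s.filter (fun x => x < v)).card else 0

variable (𝕜 : Type) [Field 𝕜]

/-- The simplicial boundary operator on the total (augmented) chain module `Finset V → 𝕜`. -/
noncomputable def bdry (V : Type) [Fintype V] [LinearOrder V] :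
    (Finset V → 𝕜) →ₗ[𝕜] (Finset V → 𝕜) where
  toFun f t := ∑ s : Finset V, (bdryCoeff s t : 𝕜) * f s
  map_add' f g := by
    funext t
    simp [mul_add, Finset.sum_add_distrib]
  map_smul' c f := by
    funext t
    simp only [Pi.smul_apply, smul_eq_mul, RingHom.id_apply, Finset.mul_sum]
    exact Finset.sum_congr rfl fun s _ => by ring

/-- The submodule of chains of degree `k`, i.e. supported on faces of `K` with `k+1` vertices. -/
def degChains (K : SimpComplex V) (k : ℤ) : Submodule 𝕜 (Finset V → 𝕜) where
  carrier := {f | ∀ s : Finset V, f s ≠ 0 → s ∈ K.faces ∧ (s.card : ℤ) = k + 1}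
  add_mem' := by
    intro f g hf hg s hs
    by_cases h : f s = 0
    · exact hg s (fun h2 => hs (by simp [h, h2]))
    · exact hf s h
  zero_mem' := by intro s hs; exact absurd rfl hs
  smul_mem' := by
    intro c f hf s hs
    exact hf s (fun h => hs (by simp [h]))

/-- Reduced `k`-cycles of `K` with coefficients in `𝕜`. -/
noncomputable def cycles (K : SimpComplex V) (k : ℤ) : Submodule 𝕜 (Finset V → 𝕜) :=
  degChains 𝕜 K k ⊓ LinearMap.ker (bdry 𝕜 V)

/-- Reduced `k`-boundaries of `K` with coefficients in `𝕜`. -/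
noncomputable def boundaries (K : SimpComplex V) (k : ℤ) : Submodule 𝕜 (Finset V → 𝕜) :=
  (degChains 𝕜 K (k + 1)).map (bdry 𝕜 V)

/-- The reduced Betti number `β_k(K; 𝕜)`: the dimension of reduced simplicial homology,
realized as the quotient of the cycles by the boundaries that are cycles. -/
noncomputable def betti (K : SimpComplex V) (k : ℤ) : ℕ :=
  Module.finrank 𝕜 (↥(cycles 𝕜 K k) ⧸ ((boundaries 𝕜 K k).comap (cycles 𝕜 K k).subtype))

/-- The flag complex of a simple graph: faces are the cliques. -/
noncomputable def flagComplex (G : SimpleGraph V) : SimpComplex V where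
  faces := by classical exact Finset.univ.filter (fun s => G.IsClique (s : Set V))
  empty_mem := by
    classical
    simp [Finset.mem_filter]
  down_closed := by
    classical
    intro s t hs hts
    simp only [Finset.mem_filter, Finset.mem_univ, true_and] at hs ⊢
    exact hs.subset (by exact_mod_cast hts)


/-- The deletion `K - v`: all faces of `K` not containing `v`. -/
def SimpComplex.delete [DecidableEq V] (K : SimpComplex V) (v : V) : SimpComplex V where
  faces := K.faces.filter (fun s => v ∉ s)
  empty_mem := by simp [K.empty_mem]
  down_closed := by
    intro s t hs hts
    simp only [Finset.mem_filter] at hs ⊢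
    exact ⟨K.down_closed hs.1 hts, fun hv => hs.2 (hts hv)⟩

/-- The link `lk_K(v) = {τ ∈ K : v ∉ τ, τ ∪ {v} ∈ K}` (with the empty simplex added, so that it
is a simplicial complex even when `v` is not a vertex of `K`). -/
def SimpComplex.link [DecidableEq V] (K : SimpComplex V) (v : V) : SimpComplex V where
  faces := insert ∅ (K.faces.filter (fun s => v ∉ s ∧ insert v s ∈ K.faces))
  empty_mem := Finset.mem_insert_self _ _
  down_closed := by
    intro s t hs hts
    rcases Finset.mem_insert.1 hs with h | h
    · subst h
      rw [Finset.subset_empty.1 hts]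
      exact Finset.mem_insert_self _ _
    · simp only [Finset.mem_filter] at h
      refine Finset.mem_insert_of_mem (Finset.mem_filter.2 ⟨K.down_closed h.1 hts, ?_, ?_⟩)
      · exact fun hv => h.2.1 (hts hv)
      · exact K.down_closed h.2.2 (Finset.insert_subset_insert v hts)

section Aux

def sg (v : V) (t : Finset V) : 𝕜 := (-1) ^ (t.filter (fun x => x < v)).card

lemma sg_mul_self (v : V) (t : Finset V) : sg 𝕜 v t * sg 𝕜 v t = 1 := by
  rw [sg, ← mul_pow]; norm_num

lemma sg_insert (v u : V) (t : Finset V) (hu : u ∉ t) :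
    sg 𝕜 v (insert u t) = (if u < v then -1 else 1) * sg 𝕜 v t := by
  unfold sg
  rw [Finset.filter_insert]
  split_ifs with h
  · rw [Finset.card_insert_of_notMem (fun hc => hu (Finset.mem_of_mem_filter u hc)),
      pow_succ]
    ring
  · rw [one_mul]

lemma bdryCoeff_insert (u : V) (t : Finset V) (hu : u ∉ t) :
    bdryCoeff (insert u t) t = (-1 : ℤ) ^ (t.filter (fun x => x < u)).card := by
  unfold bdryCoeff
  rw [Finset.sum_insert hu]
  have h1 : (insert u t).erase u = t := Finset.erase_insert hu
  rw [if_pos h1, Finset.filter_insert, if_neg (lt_irrefl u)]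
  have h2 : ∀ x ∈ t, (if (insert u t).erase x = t then
      (-1 : ℤ) ^ ((insert u t).filter (fun y => y < x)).card else 0) = 0 := by
    intro x hx
    rw [if_neg]
    intro hc
    have : u ∈ t := hc ▸ Finset.mem_erase.2 ⟨fun h => hu (h ▸ hx), Finset.mem_insert_self u t⟩
    exact hu this
  rw [Finset.sum_eq_zero h2, add_zero]

lemma bdryCoeff_eq_zero (s t : Finset V) (h : ∀ u, u ∉ t → s ≠ insert u t) :
    bdryCoeff s t = 0 := by
  unfold bdryCoeff
  refine Finset.sum_eq_zero fun x hx => ?_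
  rw [if_neg]
  intro hc
  exact h x (hc ▸ Finset.notMem_erase x s) (by rw [← hc, Finset.insert_erase hx])

lemma bdry_apply (f : Finset V → 𝕜) (t : Finset V) :
    bdry 𝕜 V f t = ∑ u ∈ tᶜ, sg 𝕜 u t * f (insert u t) := by
  have key : ∑ s : Finset V, (bdryCoeff s t : 𝕜) * f s
      = ∑ s ∈ tᶜ.image (fun u => insert u t), (bdryCoeff s t : 𝕜) * f s := by
    refine (Finset.sum_subset (Finset.subset_univ _) ?_).symm
    intro s _ hs
    rw [bdryCoeff_eq_zero s t, Int.cast_zero, zero_mul]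
    intro u hu hc
    exact hs (Finset.mem_image.2 ⟨u, Finset.mem_compl.2 hu, hc.symm⟩)
  have hinj : ∀ x ∈ tᶜ, ∀ y ∈ tᶜ, insert x t = insert y t → x = y := by
    intro x hx y hy hxy
    have : x ∈ insert y t := hxy ▸ Finset.mem_insert_self x t
    rcases Finset.mem_insert.1 this with h | h
    · exact h
    · exact absurd h (Finset.mem_compl.1 hx)
  show ∑ s : Finset V, (bdryCoeff s t : 𝕜) * f s = _
  rw [key, Finset.sum_image hinj]
  refine Finset.sum_congr rfl fun u hu => ?_
  rw [bdryCoeff_insert u t (Finset.mem_compl.1 hu), sg]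
  push_cast
  ring

end Aux
section Aux2
set_option linter.unusedSectionVars false

noncomputable def Lf (v : V) (f : Finset V → 𝕜) : Finset V → 𝕜 := fun t =>
  if v ∈ t then 0 else sg 𝕜 v t * f (insert v t)

noncomputable def Mf (v : V) (f : Finset V → 𝕜) : Finset V → 𝕜 := fun s =>
  if v ∈ s then sg 𝕜 v (s.erase v) * f (s.erase v) else 0

lemma Lf_add (v : V) (f g : Finset V → 𝕜) : Lf 𝕜 v (f + g) = Lf 𝕜 v f + Lf 𝕜 v g := by
  funext t; unfold Lf; by_cases h : v ∈ t <;> simp [h] <;> ring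

lemma Lf_smul (v : V) (c : 𝕜) (f : Finset V → 𝕜) : Lf 𝕜 v (c • f) = c • Lf 𝕜 v f := by
  funext t; unfold Lf; by_cases h : v ∈ t <;> simp [h] <;> ring

lemma Lf_zero (v : V) : Lf 𝕜 v (0 : Finset V → 𝕜) = 0 := by
  funext t; unfold Lf; by_cases h : v ∈ t <;> simp [h]

/-- Identity (I): `∂ ∘ L = - L ∘ ∂`. -/
lemma bdry_Lf (v : V) (f : Finset V → 𝕜) :
    bdry 𝕜 V (Lf 𝕜 v f) = - Lf 𝕜 v (bdry 𝕜 V f) := by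
  funext t
  by_cases hv : v ∈ t
  · rw [bdry_apply, Pi.neg_apply]
    rw [Finset.sum_eq_zero, show Lf 𝕜 v (bdry 𝕜 V f) t = 0 by rw [Lf, if_pos hv], neg_zero]
    intro u hu
    rw [show Lf 𝕜 v f (insert u t) = 0 by
      rw [Lf, if_pos (Finset.mem_insert_of_mem hv)]]
    ring
  · rw [bdry_apply, Pi.neg_apply]
    have hvc : v ∈ tᶜ := Finset.mem_compl.2 hv
    rw [show tᶜ = insert v (tᶜ.erase v) from (Finset.insert_erase hvc).symm,
      Finset.sum_insert (Finset.notMem_erase v _)]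
    rw [show Lf 𝕜 v f (insert v t) = 0 by rw [Lf, if_pos (Finset.mem_insert_self v t)],
      mul_zero, zero_add]
    rw [show Lf 𝕜 v (bdry 𝕜 V f) t = sg 𝕜 v t * bdry 𝕜 V f (insert v t) by rw [Lf, if_neg hv]]
    rw [bdry_apply, show (insert v t)ᶜ = tᶜ.erase v from Finset.compl_insert]
    rw [Finset.mul_sum, ← Finset.sum_neg_distrib]
    refine Finset.sum_congr rfl fun u hu => ?_
    have hut : u ∉ t := Finset.mem_compl.1 (Finset.mem_of_mem_erase hu)
    have hune : u ≠ v := Finset.ne_of_mem_erase hu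
    have h1 : v ∉ insert u t := by
      intro hc; rcases Finset.mem_insert.1 hc with h | h
      · exact hune h.symm
      · exact hv h
    rw [show Lf 𝕜 v f (insert u t) = sg 𝕜 v (insert u t) * f (insert v (insert u t)) by
      rw [Lf, if_neg h1]]
    rw [Finset.insert_comm u v t]
    rw [sg_insert 𝕜 v u t hut, sg_insert 𝕜 u v t hv]
    rcases lt_or_gt_of_ne hune with h | h
    · rw [if_pos h, if_neg (asymm h)]; ring
    · rw [if_neg (asymm h), if_pos h]; ring

/-- Identity (II): `∂ ∘ M = id - M ∘ ∂`. -/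
lemma bdry_Mf (v : V) (f : Finset V → 𝕜) :
    bdry 𝕜 V (Mf 𝕜 v f) = f - Mf 𝕜 v (bdry 𝕜 V f) := by
  funext t
  rw [bdry_apply, Pi.sub_apply]
  by_cases hv : v ∈ t
  · have hv' : v ∉ t.erase v := Finset.notMem_erase v t
    have ht : insert v (t.erase v) = t := Finset.insert_erase hv
    rw [show Mf 𝕜 v (bdry 𝕜 V f) t = sg 𝕜 v (t.erase v) * bdry 𝕜 V f (t.erase v) by
      rw [Mf, if_pos hv]]
    rw [bdry_apply 𝕜 f (t.erase v), show (t.erase v)ᶜ = insert v tᶜ from Finset.compl_erase]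
    have hvtc : v ∉ tᶜ := fun hc => (Finset.mem_compl.1 hc) hv
    rw [Finset.sum_insert hvtc, ht, mul_add, ← mul_assoc,
      sg_mul_self, one_mul, sub_add_eq_sub_sub, sub_self, zero_sub, Finset.mul_sum,
      ← Finset.sum_neg_distrib]
    refine Finset.sum_congr rfl fun u hu => ?_
    have hut : u ∉ t := Finset.mem_compl.1 hu
    have hune : u ≠ v := fun hc => hut (hc ▸ hv)
    have hvm : v ∈ insert u t := Finset.mem_insert_of_mem hv
    have hut' : u ∉ t.erase v := fun hc => hut (Finset.mem_of_mem_erase hc)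
    rw [show Mf 𝕜 v f (insert u t) = sg 𝕜 v ((insert u t).erase v) * f ((insert u t).erase v) by
      rw [Mf, if_pos hvm]]
    rw [Finset.erase_insert_of_ne hune]
    rw [show sg 𝕜 u t = sg 𝕜 u (insert v (t.erase v)) by rw [ht],
      sg_insert 𝕜 u v (t.erase v) hv', sg_insert 𝕜 v u (t.erase v) hut']
    rcases lt_or_gt_of_ne hune with h | h
    · rw [if_pos h, if_neg (asymm h)]; ring
    · rw [if_neg (asymm h), if_pos h]; ring
  · rw [show Mf 𝕜 v (bdry 𝕜 V f) t = 0 by rw [Mf, if_neg hv], sub_zero]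
    have hvc : v ∈ tᶜ := Finset.mem_compl.2 hv
    rw [Finset.sum_eq_single_of_mem v hvc]
    · rw [show Mf 𝕜 v f (insert v t) = sg 𝕜 v ((insert v t).erase v) * f ((insert v t).erase v) by
        rw [Mf, if_pos (Finset.mem_insert_self v t)]]
      rw [Finset.erase_insert hv, ← mul_assoc, sg_mul_self, one_mul]
    · intro u hu hune
      have hut : u ∉ t := Finset.mem_compl.1 hu
      rw [show Mf 𝕜 v f (insert u t) = 0 by
        rw [Mf, if_neg]
        intro hc
        rcases Finset.mem_insert.1 hc with h | h
        · exact hune h.symm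
        · exact hv h]
      ring

end Aux2
section Aux3
set_option linter.unusedSectionVars false

lemma mem_degChains {K : SimpComplex V} {k : ℤ} {f : Finset V → 𝕜} :
    f ∈ degChains 𝕜 K k ↔ ∀ s : Finset V, f s ≠ 0 → s ∈ K.faces ∧ (s.card : ℤ) = k + 1 :=
  Iff.rfl

lemma mem_link_faces {K : SimpComplex V} {v : V} {t : Finset V} (h1 : t ∈ K.faces)
    (h2 : v ∉ t) (h3 : insert v t ∈ K.faces) : t ∈ (K.link v).faces :=
  Finset.mem_insert_of_mem (Finset.mem_filter.2 ⟨h1, h2, h3⟩)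

lemma link_subset {K : SimpComplex V} {v : V} {t : Finset V} (h : t ∈ (K.link v).faces) :
    t = ∅ ∨ (t ∈ K.faces ∧ v ∉ t ∧ insert v t ∈ K.faces) := by
  rcases Finset.mem_insert.1 h with h | h
  · exact Or.inl h
  · exact Or.inr (by simpa using Finset.mem_filter.1 h)

lemma Mf_zero (v : V) : Mf 𝕜 v (0 : Finset V → 𝕜) = 0 := by
  funext t; unfold Mf; by_cases h : v ∈ t <;> simp [h]

lemma Lf_mem_degChains {K : SimpComplex V} (v : V) {m : ℤ} {z : Finset V → 𝕜}
    (hz : z ∈ degChains 𝕜 K m) : Lf 𝕜 v z ∈ degChains 𝕜 (K.link v) (m - 1) := by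
  intro t ht
  rw [Lf] at ht
  by_cases hv : v ∈ t
  · rw [if_pos hv] at ht; exact absurd rfl ht
  · rw [if_neg hv] at ht
    have hz' : z (insert v t) ≠ 0 := right_ne_zero_of_mul ht
    obtain ⟨hmem, hcard⟩ := hz _ hz'
    have htK : t ∈ K.faces := K.down_closed hmem (Finset.subset_insert v t)
    refine ⟨mem_link_faces htK hv hmem, ?_⟩
    rw [Finset.card_insert_of_notMem hv] at hcard
    push_cast at hcard ⊢
    omega

lemma Lf_mem_cycles {K : SimpComplex V} (v : V) {k : ℤ} {z : Finset V → 𝕜}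
    (hz : z ∈ cycles 𝕜 K k) : Lf 𝕜 v z ∈ cycles 𝕜 (K.link v) (k - 1) := by
  rw [cycles, Submodule.mem_inf] at hz ⊢
  refine ⟨Lf_mem_degChains 𝕜 v hz.1, ?_⟩
  rw [LinearMap.mem_ker, bdry_Lf, LinearMap.mem_ker.1 hz.2, Lf_zero, neg_zero]

lemma Lf_mem_boundaries {K : SimpComplex V} (v : V) {k : ℤ} {z : Finset V → 𝕜}
    (hz : z ∈ boundaries 𝕜 K k) : Lf 𝕜 v z ∈ boundaries 𝕜 (K.link v) (k - 1) := by
  obtain ⟨w, hw, rfl⟩ := Submodule.mem_map.1 hz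
  have hLw : Lf 𝕜 v w ∈ degChains 𝕜 (K.link v) (k - 1 + 1) := by
    have := Lf_mem_degChains 𝕜 v hw
    rwa [show (k + 1 - 1 : ℤ) = k - 1 + 1 by ring] at this
  refine Submodule.mem_map.2 ⟨-Lf 𝕜 v w, neg_mem hLw, ?_⟩
  rw [map_neg, bdry_Lf, neg_neg]

lemma degChains_v_free {K : SimpComplex V} {v : V} {m : ℤ} {w : Finset V → 𝕜}
    (hw : w ∈ degChains 𝕜 (K.link v) m) {t : Finset V} (hv : v ∈ t) : w t = 0 := by
  by_contra h
  rcases link_subset (hw t h).1 with h' | h'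
  · rw [h'] at hv; exact absurd hv (Finset.notMem_empty v)
  · exact h'.2.1 hv

lemma Mf_mem_degChains {K : SimpComplex V} {v : V} {m : ℤ} {w : Finset V → 𝕜}
    (hw : w ∈ degChains 𝕜 (K.link v) m) (hm : m + 1 ≠ 0) :
    Mf 𝕜 v w ∈ degChains 𝕜 K (m + 1) := by
  intro s hs
  rw [Mf] at hs
  by_cases hv : v ∈ s
  · rw [if_pos hv] at hs
    have hw' : w (s.erase v) ≠ 0 := right_ne_zero_of_mul hs
    obtain ⟨hmem, hcard⟩ := hw _ hw'
    rcases link_subset hmem with h' | h'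
    · rw [h', Finset.card_empty] at hcard
      exact absurd hcard.symm hm
    · have : insert v (s.erase v) = s := Finset.insert_erase hv
      refine ⟨this ▸ h'.2.2, ?_⟩
      have hc := Finset.card_erase_add_one hv
      push_cast [← hc] at hcard ⊢
      omega
  · rw [if_neg hv] at hs; exact absurd rfl hs

lemma Mf_Lf_apply {v : V} (z : Finset V → 𝕜) (t : Finset V) :
    Mf 𝕜 v (Lf 𝕜 v z) t = if v ∈ t then z t else 0 := by
  rw [Mf]
  by_cases hv : v ∈ t
  · rw [if_pos hv, if_pos hv, Lf, if_neg (Finset.notMem_erase v t),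
      Finset.insert_erase hv, ← mul_assoc, sg_mul_self, one_mul]
  · rw [if_neg hv, if_neg hv]

/-- The key construction for exactness: a cycle of `K` whose link restriction bounds is,
up to a boundary of `K`, a cycle of `K - v`. -/
lemma key_construction {K : SimpComplex V} {v : V} {k : ℤ} (hk : 1 ≤ k)
    {z : Finset V → 𝕜} (hz : z ∈ cycles 𝕜 K k)
    {w : Finset V → 𝕜} (hw : w ∈ degChains 𝕜 (K.link v) (k - 1 + 1))
    (hbw : bdry 𝕜 V w = Lf 𝕜 v z) :
    ∃ z', z' ∈ cycles 𝕜 (K.delete v) k ∧ z - z' ∈ boundaries 𝕜 K k := by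
  rw [cycles, Submodule.mem_inf] at hz
  refine ⟨z + w - Mf 𝕜 v (Lf 𝕜 v z), ?_, ?_⟩
  · rw [cycles, Submodule.mem_inf]
    constructor
    · -- degChains of the deletion
      intro t ht
      simp only [Pi.sub_apply, Pi.add_apply, Mf_Lf_apply] at ht
      by_cases hv : v ∈ t
      · rw [if_pos hv, degChains_v_free 𝕜 hw hv] at ht
        simp at ht
      · rw [if_neg hv, sub_zero] at ht
        have h2 : t ∈ K.faces ∧ (t.card : ℤ) = k + 1 := by
          by_cases hzt : z t = 0
          · rw [hzt, zero_add] at ht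
            obtain ⟨hmem, hcard⟩ := hw t ht
            rcases link_subset hmem with h' | h'
            · rw [h', Finset.card_empty] at hcard
              omega
            · exact ⟨h'.1, by omega⟩
          · exact hz.1 t hzt
        exact ⟨Finset.mem_filter.2 ⟨h2.1, hv⟩, h2.2⟩
    · -- it is a cycle
      rw [LinearMap.mem_ker, map_sub, map_add, LinearMap.mem_ker.1 hz.2, zero_add, hbw,
        bdry_Mf, bdry_Lf, LinearMap.mem_ker.1 hz.2, Lf_zero, neg_zero, Mf_zero, sub_zero,
        sub_self]
  · -- the difference is a boundary
    have hMw : Mf 𝕜 v w ∈ degChains 𝕜 K (k + 1) := by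
      have h3 := Mf_mem_degChains 𝕜 hw (by omega)
      rwa [show (k - 1 + 1 + 1 : ℤ) = k + 1 by ring] at h3
    refine Submodule.mem_map.2 ⟨-Mf 𝕜 v w, neg_mem hMw, ?_⟩
    rw [map_neg, bdry_Mf, hbw]
    abel

end Aux3
section Aux4
set_option linter.unusedSectionVars false

lemma delete_degChains_le (K : SimpComplex V) (v : V) (m : ℤ) :
    degChains 𝕜 (K.delete v) m ≤ degChains 𝕜 K m := fun f hf s hs =>
  ⟨(Finset.mem_filter.1 ((hf s hs).1)).1, (hf s hs).2⟩

lemma delete_cycles_le (K : SimpComplex V) (v : V) (k : ℤ) :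
    cycles 𝕜 (K.delete v) k ≤ cycles 𝕜 K k :=
  inf_le_inf (delete_degChains_le 𝕜 K v k) le_rfl

lemma delete_boundaries_le (K : SimpComplex V) (v : V) (k : ℤ) :
    boundaries 𝕜 (K.delete v) k ≤ boundaries 𝕜 K k :=
  Submodule.map_mono (delete_degChains_le 𝕜 K v (k + 1))

/-- The linear map on cycles induced by the link restriction. -/
noncomputable def Lcyc (K : SimpComplex V) (v : V) (k : ℤ) :
    cycles 𝕜 K k →ₗ[𝕜] cycles 𝕜 (K.link v) (k - 1) where
  toFun z := ⟨Lf 𝕜 v z.1, Lf_mem_cycles 𝕜 v z.2⟩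
  map_add' a b := Subtype.ext (by
    show Lf 𝕜 v ((a : Finset V → 𝕜) + b) = Lf 𝕜 v a.1 + Lf 𝕜 v b.1
    rw [Lf_add])
  map_smul' c a := Subtype.ext (by
    show Lf 𝕜 v (c • (a : Finset V → 𝕜)) = c • Lf 𝕜 v a.1
    rw [Lf_smul])

end Aux4
/-- For a finite abstract simplicial complex `K`, a vertex `v` of `K`, and
`k ≥ 1`, one has `β_k(K) ≤ β_k(K - v) + β_{k-1}(lk_K(v))`. -/
theorem betti_le_betti_delete_add_betti_link
    (𝕜 : Type) [Field 𝕜] {V : Type} [Fintype V] [LinearOrder V]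
    (K : SimpComplex V) (v : V) (hv : {v} ∈ K.faces) (k : ℤ) (hk : 1 ≤ k) :
    betti 𝕜 K k ≤ betti 𝕜 (K.delete v) k + betti 𝕜 (K.link v) (k - 1) := by
  classical
  set BK := (boundaries 𝕜 K k).comap (cycles 𝕜 K k).subtype with hBK
  set BL := (boundaries 𝕜 (K.link v) (k - 1)).comap (cycles 𝕜 (K.link v) (k - 1)).subtype
    with hBL
  set BD := (boundaries 𝕜 (K.delete v) k).comap (cycles 𝕜 (K.delete v) k).subtype with hBD
  -- the induced map on homology from the link restriction
  have hq : BK ≤ LinearMap.ker (BL.mkQ ∘ₗ Lcyc 𝕜 K v k) := by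
    intro z hz
    have hz' : (z : Finset V → 𝕜) ∈ boundaries 𝕜 K k := hz
    rw [LinearMap.mem_ker, LinearMap.comp_apply, Submodule.mkQ_apply,
      Submodule.Quotient.mk_eq_zero]
    exact Lf_mem_boundaries 𝕜 v hz'
  let q : (cycles 𝕜 K k ⧸ BK) →ₗ[𝕜] (cycles 𝕜 (K.link v) (k - 1) ⧸ BL) :=
    BK.liftQ (BL.mkQ ∘ₗ Lcyc 𝕜 K v k) hq
  -- the induced map on homology from the inclusion of the deletion
  have hψ : BD ≤ LinearMap.ker (BK.mkQ ∘ₗ Submodule.inclusion (delete_cycles_le 𝕜 K v k)) := by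
    intro z hz
    have hz' : (z : Finset V → 𝕜) ∈ boundaries 𝕜 (K.delete v) k := hz
    rw [LinearMap.mem_ker, LinearMap.comp_apply, Submodule.mkQ_apply,
      Submodule.Quotient.mk_eq_zero]
    exact delete_boundaries_le 𝕜 K v k hz'
  let ψ : (cycles 𝕜 (K.delete v) k ⧸ BD) →ₗ[𝕜] (cycles 𝕜 K k ⧸ BK) :=
    BD.liftQ (BK.mkQ ∘ₗ Submodule.inclusion (delete_cycles_le 𝕜 K v k)) hψ
  -- exactness: the kernel of `q` is contained in the range of `ψ`
  have hker : LinearMap.ker q ≤ LinearMap.range ψ := by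
    intro x hx
    obtain ⟨z, rfl⟩ := Submodule.Quotient.mk_surjective BK x
    rw [LinearMap.mem_ker, Submodule.liftQ_apply, LinearMap.comp_apply,
      Submodule.mkQ_apply, Submodule.Quotient.mk_eq_zero] at hx
    have hx' : Lf 𝕜 v (z : Finset V → 𝕜) ∈ boundaries 𝕜 (K.link v) (k - 1) := hx
    obtain ⟨w, hw, hbw⟩ := Submodule.mem_map.1 hx'
    obtain ⟨z', hz'c, hdiff⟩ := key_construction 𝕜 hk z.2 hw hbw
    refine ⟨Submodule.Quotient.mk ⟨z', hz'c⟩, ?_⟩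
    rw [Submodule.liftQ_apply, LinearMap.comp_apply, Submodule.mkQ_apply,
      Submodule.Quotient.eq]
    show (Submodule.inclusion (delete_cycles_le 𝕜 K v k) ⟨z', hz'c⟩ - z : cycles 𝕜 K k)
      ∈ BK
    have : ((Submodule.inclusion (delete_cycles_le 𝕜 K v k) ⟨z', hz'c⟩ - z :
        cycles 𝕜 K k) : Finset V → 𝕜) = z' - (z : Finset V → 𝕜) := rfl
    show ((Submodule.inclusion (delete_cycles_le 𝕜 K v k) ⟨z', hz'c⟩ - z :
        cycles 𝕜 K k) : Finset V → 𝕜) ∈ boundaries 𝕜 K k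
    rw [this]
    have := neg_mem hdiff
    rwa [neg_sub] at this
  -- dimension counting
  have h1 : betti 𝕜 K k
      = Module.finrank 𝕜 (LinearMap.range q) + Module.finrank 𝕜 (LinearMap.ker q) :=
    (LinearMap.finrank_range_add_finrank_ker q).symm
  have h2 : Module.finrank 𝕜 (LinearMap.range q) ≤ betti 𝕜 (K.link v) (k - 1) :=
    Submodule.finrank_le _
  have h3 : Module.finrank 𝕜 (LinearMap.ker q) ≤ betti 𝕜 (K.delete v) k := by
    calc Module.finrank 𝕜 (LinearMap.ker q) ≤ Module.finrank 𝕜 (LinearMap.range ψ) :=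
          Submodule.finrank_mono hker
      _ ≤ betti 𝕜 (K.delete v) k := LinearMap.finrank_range_le ψ
  omega
end

section
/- Let S and n be positive integers, and let x_1, …, x_n be integers with x_i ≥ 1 for all i and Σ_{i=1}^n x_i = S. Define y_i = ⌈S/n⌉ for 1 ≤ i ≤ (S mod n) and y_i = ⌊S/n⌋ otherwise. Then Π_{i=1}^n (x_i − 1) ≤ Π_{i=1}^n (y_i − 1). -/
private lemma sum_split2 {n : ℕ} (f : Fin n → ℕ) {i j : Fin n} (hij : i ≠ j) :
    ∑ k, f k = f i + f j + ∑ k ∈ Finset.univ \ {i, j}, f k := by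
  rw [← Finset.sum_sdiff (Finset.subset_univ {i, j}), Finset.sum_pair hij]; ring

private lemma prod_split2 {n : ℕ} (f : Fin n → ℕ) {i j : Fin n} (hij : i ≠ j) :
    ∏ k, f k = f i * f j * ∏ k ∈ Finset.univ \ {i, j}, f k := by
  rw [← Finset.prod_sdiff (Finset.subset_univ {i, j}), Finset.prod_pair hij]; ring

private lemma flat_case (n : ℕ) (hn : 0 < n) (m : ℕ) (a : Fin n → ℕ)
    (h : ∀ k, a k = m ∨ a k = m + 1) (hmin : ∃ k, a k = m) :
    ∏ i, a i ≤ ((∑ i, a i) / n + 1) ^ ((∑ i, a i) % n) * ((∑ i, a i) / n) ^ (n - (∑ i, a i) % n) := by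
  classical
  set P : Fin n → Prop := fun k => a k = m + 1 with hP
  set c := (Finset.univ.filter P).card with hc
  have hcle : c ≤ n := by
    rw [hc]
    exact (Finset.card_filter_le _ _).trans (by simp)
  have hcard : (Finset.univ.filter (fun k => ¬ P k)).card = n - c := by
    have h2 := Finset.card_filter_add_card_filter_not (s := (Finset.univ : Finset (Fin n))) (p := P)
    simp only [Finset.card_univ, Fintype.card_fin] at h2
    omega
  have hcompl : ∀ k ∈ Finset.univ.filter (fun k => ¬ P k), a k = m := by
    intro k hk
    simp only [P, Finset.mem_filter] at hk
    rcases h k with h' | h' <;> omega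
  have hfil : ∀ k ∈ Finset.univ.filter P, a k = m + 1 := by
    intro k hk
    simpa [P] using (Finset.mem_filter.mp hk).2
  have hprod : ∏ i, a i = (m+1)^c * m^(n-c) := by
    rw [← Finset.prod_filter_mul_prod_filter_not Finset.univ P,
        Finset.prod_congr rfl hfil, Finset.prod_congr rfl hcompl,
        Finset.prod_const, Finset.prod_const, hcard]
  have hsum : ∑ i, a i = n * m + c := by
    rw [← Finset.sum_filter_add_sum_filter_not Finset.univ P,
        Finset.sum_congr rfl hfil, Finset.sum_congr rfl hcompl,
        Finset.sum_const, Finset.sum_const, hcard, smul_eq_mul, smul_eq_mul]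
    have h4 : c * m + (n - c) * m = n * m := by rw [← add_mul, Nat.add_sub_cancel' hcle]
    calc c * (m + 1) + (n - c) * m = (c * m + (n - c) * m) + c := by ring
      _ = n * m + c := by rw [h4]
  have hclt : c < n := by
    obtain ⟨k, hk⟩ := hmin
    have hkmem : k ∈ Finset.univ.filter (fun k => ¬ P k) := by
      simp [P, hk]
    have hp := Finset.card_pos.mpr ⟨k, hkmem⟩
    omega
  have hmod : (∑ i, a i) % n = c := by
    rw [hsum, Nat.mul_add_mod, Nat.mod_eq_of_lt hclt]
  have hdiv : (∑ i, a i) / n = m := by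
    rw [hsum, Nat.mul_add_div hn, Nat.div_eq_of_lt hclt, add_zero]
  rw [hmod, hdiv, hprod]

private lemma key (n : ℕ) (hn : 0 < n) : ∀ (W : ℕ) (a : Fin n → ℕ), (∑ i, (a i) ^ 2) = W →
    ∏ i, a i ≤ ((∑ i, a i) / n + 1) ^ ((∑ i, a i) % n) * ((∑ i, a i) / n) ^ (n - (∑ i, a i) % n) := by
  intro W
  induction W using Nat.strong_induction_on with
  | _ W ih =>
    intro a hW
    obtain ⟨i₀, -, hi₀⟩ := Finset.exists_min_image Finset.univ a
      (Finset.univ_nonempty_iff.mpr (Fin.pos_iff_nonempty.mp hn))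
    by_cases hflat : ∀ k, a k ≤ a i₀ + 1
    · exact flat_case n hn (a i₀) a
        (fun k => by have h1 := hi₀ k (Finset.mem_univ k); have h2 := hflat k; omega)
        ⟨i₀, rfl⟩
    · push_neg at hflat
      obtain ⟨j, hj⟩ := hflat
      have hij : i₀ ≠ j := by rintro rfl; omega
      obtain ⟨d, hd⟩ : ∃ d, a j = d + 1 := ⟨a j - 1, by omega⟩
      have hdge : a i₀ + 1 ≤ d := by omega
      set a' : Fin n → ℕ := Function.update (Function.update a j d) i₀ (a i₀ + 1) with ha'
      have ha'i : a' i₀ = a i₀ + 1 := Function.update_self _ _ _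
      have ha'j : a' j = d := by
        rw [ha', Function.update_of_ne (Ne.symm hij), Function.update_self]
      have ha'k : ∀ k ∈ Finset.univ \ ({i₀, j} : Finset (Fin n)), a' k = a k := by
        intro k hk
        simp only [Finset.mem_sdiff, Finset.mem_insert, Finset.mem_singleton] at hk
        push_neg at hk
        rw [ha', Function.update_of_ne hk.2.1, Function.update_of_ne hk.2.2]
      have hsum' : ∑ k, a' k = ∑ k, a k := by
        have e1 := sum_split2 a' hij
        have e2 := sum_split2 a hij
        have e3 : ∑ k ∈ Finset.univ \ ({i₀, j} : Finset (Fin n)), a' k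
            = ∑ k ∈ Finset.univ \ ({i₀, j} : Finset (Fin n)), a k :=
          Finset.sum_congr rfl (fun k hk => ha'k k hk)
        rw [ha'i, ha'j, e3] at e1
        omega
      have hsq : ∑ k, (a' k) ^ 2 < W := by
        have e1 := sum_split2 (fun k => a' k ^ 2) hij
        have e2 := sum_split2 (fun k => a k ^ 2) hij
        have e3 : ∑ k ∈ Finset.univ \ ({i₀, j} : Finset (Fin n)), a' k ^ 2
            = ∑ k ∈ Finset.univ \ ({i₀, j} : Finset (Fin n)), a k ^ 2 :=
          Finset.sum_congr rfl (fun k hk => by rw [ha'k k hk])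
        rw [ha'i, ha'j, e3] at e1
        have hlt : (a i₀ + 1)^2 + d^2 < a i₀ ^2 + a j ^2 := by nlinarith
        omega
      have hprodle : ∏ k, a k ≤ ∏ k, a' k := by
        have e1 := prod_split2 a' hij
        have e2 := prod_split2 a hij
        have e3 : ∏ k ∈ Finset.univ \ ({i₀, j} : Finset (Fin n)), a' k
            = ∏ k ∈ Finset.univ \ ({i₀, j} : Finset (Fin n)), a k :=
          Finset.prod_congr rfl (fun k hk => ha'k k hk)
        rw [ha'i, ha'j, e3] at e1
        rw [e1, e2]
        have hmul : a i₀ * a j ≤ (a i₀ + 1) * d := by nlinarith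
        exact Nat.mul_le_mul_right _ hmul
      have hkey := ih _ hsq a' rfl
      rw [hsum'] at hkey
      exact hprodle.trans hkey

/-- If `x₁, …, xₙ ≥ 1` are integers with `Σ xᵢ = S` (`S`, `n` positive), and
`yᵢ = ⌈S/n⌉` for `1 ≤ i ≤ S mod n` and `yᵢ = ⌊S/n⌋` otherwise, then
`Π (xᵢ - 1) ≤ Π (yᵢ - 1)`. (Indices `i : Fin n` correspond to the 1-based index `i + 1`.) -/
theorem prod_sub_one_le_prod_balanced (S n : ℕ) (hS : 0 < S) (hn : 0 < n)
    (x : Fin n → ℤ) (hx : ∀ i, 1 ≤ x i) (hsum : ∑ i, x i = S)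
    (y : Fin n → ℤ)
    (hy : ∀ i : Fin n,
      y i = if (i : ℕ) + 1 ≤ S % n then (((S + n - 1) / n : ℕ) : ℤ) else ((S / n : ℕ) : ℤ)) :
    ∏ i, (x i - 1) ≤ ∏ i, (y i - 1) := by
  classical
  set a : Fin n → ℕ := fun i => (x i - 1).toNat with ha
  have hax : ∀ i, x i - 1 = (a i : ℤ) := fun i => by
    have h1 := hx i; simp only [ha]; omega
  set T := ∑ i, a i with hT
  have hTS : T + n = S := by
    have h2 : ∑ i, (x i - 1) = (T : ℤ) := by
      rw [hT, Nat.cast_sum]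
      exact Finset.sum_congr rfl (fun i _ => hax i)
    rw [Finset.sum_sub_distrib, hsum] at h2
    simp only [Finset.sum_const, Finset.card_univ, Fintype.card_fin, nsmul_eq_mul, mul_one] at h2
    omega
  have hrn : T % n < n := Nat.mod_lt _ hn
  have hSmod : S % n = T % n := by rw [← hTS, Nat.add_mod_right]
  have hSdiv : S / n = T / n + 1 := by rw [← hTS, Nat.add_div_right _ hn]
  have hprodx : ∏ i, (x i - 1) = ((∏ i, a i : ℕ) : ℤ) := by
    rw [Nat.cast_prod]
    exact Finset.prod_congr rfl (fun i _ => hax i)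
  have hy' : ∏ i, (y i - 1)
      = (((T / n + 1) ^ (T % n) * (T / n) ^ (n - T % n) : ℕ) : ℤ) := by
    rcases Nat.eq_zero_or_pos (T % n) with hr0 | hrpos
    · have hyc : ∀ i : Fin n, y i - 1 = ((T / n : ℕ) : ℤ) := by
        intro i
        rw [hy i, if_neg (by omega), hSdiv]
        push_cast; ring
      rw [Finset.prod_congr rfl (fun i _ => hyc i), Finset.prod_const, Finset.card_univ,
        Fintype.card_fin, hr0]
      push_cast [Nat.sub_zero]; ring
    · have hceil : (S + n - 1) / n = T / n + 2 := by
        have hdm := Nat.div_add_mod T n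
        have hrw : S + n - 1 = n * (T / n + 2) + (T % n - 1) := by
          have hx2 : n * (T / n + 2) = n * (T / n) + 2 * n := by ring
          omega
        have h5 : (T % n - 1) / n = 0 := Nat.div_eq_of_lt (by omega)
        rw [hrw, Nat.mul_add_div hn, h5, add_zero]
      have hyc : ∀ i : Fin n, y i - 1
          = if (i : ℕ) + 1 ≤ T % n then ((T / n + 1 : ℕ) : ℤ) else ((T / n : ℕ) : ℤ) := by
        intro i
        rw [hy i, hSmod]
        split
        · rw [hceil]; push_cast; ring
        · rw [hSdiv]; push_cast; ring
      have hcard1 : (Finset.univ.filter (fun i : Fin n => (i : ℕ) + 1 ≤ T % n)).card = T % n := by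
        have heq : (Finset.univ.filter (fun i : Fin n => (i : ℕ) + 1 ≤ T % n))
            = Finset.Iio (⟨T % n, hrn⟩ : Fin n) := by
          ext i; simp [Fin.lt_def]
        rw [heq, Fin.card_Iio]
      have hcard2 : (Finset.univ.filter (fun i : Fin n => ¬ ((i : ℕ) + 1 ≤ T % n))).card
          = n - T % n := by
        have h2 := Finset.card_filter_add_card_filter_not
          (s := (Finset.univ : Finset (Fin n))) (p := fun i : Fin n => (i : ℕ) + 1 ≤ T % n)
        simp only [Finset.card_univ, Fintype.card_fin] at h2
        omega
      rw [Finset.prod_congr rfl (fun i _ => hyc i), Finset.prod_ite, Finset.prod_const,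
        Finset.prod_const, hcard1, hcard2]
      push_cast; ring
  rw [hprodx, hy']
  exact_mod_cast key n hn _ a rfl
end

section
/- Let G be a finite simple graph with n vertices and m edges, in which every vertex has degree at least u, and let v be a vertex of degree exactly u with neighbors v_1, …, v_u. Let d_i := deg(v_i). Then for each i, the graph G − N_G[v_i] obtained by deleting the closed neighborhood N_G[v_i] = N_G(v_i) ∪ {v_i} of v_i has exactly n − d_i − 1 vertices and at most m − (d_i + ⌈(u−1)d_i / 2⌉) edges. -/
/-- Let `G` have `n` vertices and `m` edges, minimum degree at least `u`, and
let `v` be a vertex of degree exactly `u`. Then for each neighbor `w` of `v` (with `d = deg w`),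
the graph `G - N_G[w]` obtained by deleting the closed neighborhood of `w` has exactly
`n - d - 1` vertices and at most `m - (d + ⌈(u-1)d/2⌉)` edges. -/
theorem removing_closed_neighborhood_vertex_and_edge_count
    {V : Type} [Fintype V] [DecidableEq V]
    (G : SimpleGraph V) [DecidableRel G.Adj] (n m u : ℕ)
    (hn : Fintype.card V = n) (hm : Nat.card G.edgeSet = m)
    (hmin : ∀ x : V, u ≤ G.degree x)
    (v : V) (hv : G.degree v = u)
    (w : V) (hw : G.Adj v w) :
    Nat.card (((G.neighborSet w ∪ {w})ᶜ : Set V)) = n - G.degree w - 1 ∧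
    Nat.card (SimpleGraph.induce ((G.neighborSet w ∪ {w})ᶜ : Set V) G).edgeSet ≤
      m - (G.degree w + ((u - 1) * G.degree w + 1) / 2) := by
  classical
  constructor
  · rw [Nat.card_eq_fintype_card, Fintype.card_compl_set, hn]
    have hScard : Fintype.card ((G.neighborSet w ∪ {w} : Set V)) = G.degree w + 1 := by
      rw [← Set.toFinset_card, Set.toFinset_union, Set.toFinset_singleton,
        ← SimpleGraph.neighborFinset_def,
        Finset.card_union_of_disjoint (by simp), Finset.card_singleton,
        SimpleGraph.card_neighborFinset_eq_degree]
    rw [hScard]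
    omega
  · -- edge count
    set S : Finset V := G.neighborFinset w ∪ {w} with hS
    have hSmem : ∀ x : V, x ∈ S ↔ x ∈ (G.neighborSet w ∪ {w} : Set V) := by
      intro x; simp [hS, or_comm]
    set A := G.edgeFinset.filter (fun e => ¬ ∃ x ∈ S, x ∈ e) with hA
    set B := G.edgeFinset.filter (fun e => ∃ x ∈ S, x ∈ e) with hB
    have hAB : B.card + A.card = m := by
      rw [← hm, Nat.card_eq_fintype_card, ← SimpleGraph.edgeFinset_card]
      exact Finset.card_filter_add_card_filter_not _
    -- the induced graph's edges inject into A
    have hmapA : ∀ e ∈ (SimpleGraph.induce ((G.neighborSet w ∪ {w})ᶜ : Set V) G).edgeSet,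
        Sym2.map Subtype.val e ∈ A := by
      intro e he
      induction e using Sym2.ind with
      | _ a b =>
        rw [SimpleGraph.mem_edgeSet] at he
        have hadj : G.Adj a.1 b.1 := he
        rw [hA, Finset.mem_filter]
        refine ⟨by simpa using hadj, ?_⟩
        rintro ⟨x, hxS, hxe⟩
        simp only [Sym2.map_pair_eq, Sym2.mem_iff] at hxe
        rcases hxe with rfl | rfl
        · exact a.2 ((hSmem _).mp hxS)
        · exact b.2 ((hSmem _).mp hxS)
    have hinj : Nat.card (SimpleGraph.induce ((G.neighborSet w ∪ {w})ᶜ : Set V) G).edgeSet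
        ≤ A.card := by
      have : Nat.card (SimpleGraph.induce ((G.neighborSet w ∪ {w})ᶜ : Set V) G).edgeSet
          ≤ Nat.card {e // e ∈ A} := by
        apply Nat.card_le_card_of_injective
          (fun e => (⟨Sym2.map Subtype.val e.1, hmapA e.1 e.2⟩ : {e // e ∈ A}))
        intro e₁ e₂ h
        have := Sym2.map.injective Subtype.val_injective (congrArg Subtype.val h)
        exact Subtype.ext this
      simpa using this
    -- lower bound on B.card
    set B₂ := B.filter (fun e => w ∉ e) with hB₂
    have hB1sub : G.incidenceFinset w ⊆ B := by
      intro e he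
      rw [SimpleGraph.mem_incidenceFinset] at he
      rw [hB, Finset.mem_filter, SimpleGraph.mem_edgeFinset]
      exact ⟨he.1, w, by simp [hS], he.2⟩
    have hdisj : Disjoint (G.incidenceFinset w) B₂ := by
      rw [Finset.disjoint_left]
      intro e he he2
      rw [SimpleGraph.mem_incidenceFinset] at he
      rw [hB₂, Finset.mem_filter] at he2
      exact he2.2 he.2
    have hunion : G.incidenceFinset w ∪ B₂ ⊆ B := by
      apply Finset.union_subset hB1sub
      rw [hB₂]; exact Finset.filter_subset _ _
    have hBcard : G.degree w + B₂.card ≤ B.card := by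
      have := Finset.card_le_card hunion
      rwa [Finset.card_union_of_disjoint hdisj,
        SimpleGraph.card_incidenceFinset_eq_degree] at this
    -- double counting for B₂
    set F : V → Finset (Sym2 V) := fun x => (G.incidenceFinset x).erase s(x, w) with hF
    have hFsub : ∀ x ∈ G.neighborFinset w, F x ⊆ B₂.filter (fun e => x ∈ e) := by
      intro x hx e he
      rw [SimpleGraph.mem_neighborFinset] at hx
      rw [hF, Finset.mem_erase, SimpleGraph.mem_incidenceFinset] at he
      obtain ⟨hne, heE, hxe⟩ := he
      have hxw : x ≠ w := hx.ne'
      have hwe : w ∉ e := by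
        intro hwe
        exact hne ((Sym2.mem_and_mem_iff hxw).mp ⟨hxe, hwe⟩)
      rw [Finset.mem_filter, hB₂, Finset.mem_filter, hB, Finset.mem_filter,
        SimpleGraph.mem_edgeFinset]
      exact ⟨⟨⟨heE, x, by simp [hS, hx], hxe⟩, hwe⟩, hxe⟩
    have hfiber : ∀ e ∈ B₂, ((G.neighborFinset w).filter (fun x => x ∈ e)).card ≤ 2 := by
      intro e he
      have heE : e ∈ G.edgeSet := by
        rw [hB₂, Finset.mem_filter, hB, Finset.mem_filter,
          SimpleGraph.mem_edgeFinset] at he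
        exact he.1.1
      induction e using Sym2.ind with
      | _ a b =>
        have hsub : (G.neighborFinset w).filter (fun x => x ∈ s(a, b)) ⊆ {a, b} := by
          intro x hx
          rw [Finset.mem_filter, Sym2.mem_iff] at hx
          rcases hx.2 with rfl | rfl <;> simp
        calc ((G.neighborFinset w).filter (fun x => x ∈ s(a, b))).card
            ≤ ({a, b} : Finset V).card := Finset.card_le_card hsub
          _ ≤ 2 := le_trans (Finset.card_insert_le _ _) (by simp)
    have hsum : ∑ x ∈ G.neighborFinset w, (F x).card ≤ 2 * B₂.card := by
      calc ∑ x ∈ G.neighborFinset w, (F x).card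
          ≤ ∑ x ∈ G.neighborFinset w, (B₂.filter (fun e => x ∈ e)).card :=
            Finset.sum_le_sum (fun x hx => Finset.card_le_card (hFsub x hx))
        _ = ∑ e ∈ B₂, ((G.neighborFinset w).filter (fun x => x ∈ e)).card := by
            simp_rw [Finset.card_filter]
            exact Finset.sum_comm
        _ ≤ ∑ _e ∈ B₂, 2 := Finset.sum_le_sum hfiber
        _ = 2 * B₂.card := by rw [Finset.sum_const, smul_eq_mul, mul_comm]
    have hFcard : ∀ x ∈ G.neighborFinset w, u - 1 ≤ (F x).card := by
      intro x hx
      rw [SimpleGraph.mem_neighborFinset] at hx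
      have hmem : s(x, w) ∈ G.incidenceFinset x := by
        rw [SimpleGraph.mem_incidenceFinset]
        exact ⟨hx.symm, by simp⟩
      rw [hF]
      simp only []
      rw [Finset.card_erase_of_mem hmem, SimpleGraph.card_incidenceFinset_eq_degree]
      have := hmin x
      omega
    have hsum2 : (u - 1) * G.degree w ≤ ∑ x ∈ G.neighborFinset w, (F x).card := by
      have := Finset.card_nsmul_le_sum (G.neighborFinset w) (fun x => (F x).card) (u - 1) hFcard
      rwa [smul_eq_mul, SimpleGraph.card_neighborFinset_eq_degree, mul_comm] at this
    have hB2 : ((u - 1) * G.degree w + 1) / 2 ≤ B₂.card := by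
      have h2 : (u - 1) * G.degree w ≤ 2 * B₂.card := le_trans hsum2 hsum
      omega
    omega
end

section
/- Let k ≥ 0 and let G be a finite simple graph with n vertices and m edges. If m > C(n−1, 2) + k (where C(·,·) is the binomial coefficient), then β_k(X(G)) = 0. -/
open Finset

variable {V : Type} [Fintype V] [LinearOrder V]

variable (𝕜 : Type) [Field 𝕜]

/-!
Write `F(S)` for the flag complex of `G` on a vertex set `S` and `e(S)` for the number of
non-edges of `G` inside `S`. By induction on `|S|`, the reduced homology of `F(S)` vanishes in
every degree `k` with `e(S) + k + 2 ≤ |S|`. If `S` is a clique, `F(S)` is a simplex, hence a cone,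
and the cone construction is a contracting homotopy. Otherwise a non-edge `uv` in `S` gives
`F(S) = F(S - u) ∪ F(S - v)` with intersection `F(S - u - v)`; each of the three has fewer
non-edges, so the Mayer–Vietoris argument (degree `k` on the pieces, `k - 1` on the intersection)
closes the induction. For `S = V`, the condition `e(V) + k + 2 ≤ n` amounts to
`m > C(n - 1, 2) + k`, since `e(V) = C(n, 2) - m`.
-/

section FacetSign

variable {α : Type*} [LinearOrder α] (R : Type*) [CommRing R]

-- The sign of the facet `s.erase v` in `∂ s`; by `facetSign_insert_self` it is also the sign of
-- `s` in `∂ (insert v s)`.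
def facetSign (s : Finset α) (v : α) : R :=
  (-1) ^ #{x ∈ s | x < v}

variable {R}

theorem facetSign_insert {s : Finset α} {v w : α} (hw : w ∉ s) :
    facetSign R (insert w s) v = (if w < v then -1 else 1) * facetSign R s v := by
  unfold facetSign
  rw [filter_insert]
  split_ifs with h
  · rw [card_insert_of_notMem (fun hw' => hw (mem_filter.1 hw').1), pow_succ, mul_comm]
  · rw [one_mul]

theorem facetSign_insert_self (s : Finset α) (v : α) :
    facetSign R (insert v s) v = facetSign R s v := by
  simp [facetSign, filter_insert]

theorem facetSign_mul_self (s : Finset α) (v : α) : facetSign R s v * facetSign R s v = 1 := by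
  rw [facetSign, ← pow_add, Even.neg_one_pow ⟨_, rfl⟩]

theorem facetSign_mul_facetSign_insert_swap {s : Finset α} {v w : α} (hv : v ∉ s) (hw : w ∉ s)
    (hvw : v ≠ w) :
    facetSign R s v * facetSign R (insert v s) w =
      -(facetSign R s w * facetSign R (insert w s) v) := by
  rw [facetSign_insert hv, facetSign_insert hw]
  rcases hvw.lt_or_gt with h | h <;> simp [h, h.not_gt, mul_comm]

theorem facetSign_insert_mul_facetSign_insert_insert {s : Finset α} {v w : α} (hv : v ∉ s)
    (hw : w ∉ s) (hvw : v ≠ w) :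
    facetSign R (insert w s) v * facetSign R (insert v (insert w s)) w =
      -(facetSign R (insert w s) w * facetSign R s v) := by
  rw [facetSign_insert hw, facetSign_insert (by simp [hv, hvw]), facetSign_insert_self]
  rcases hvw.lt_or_gt with h | h <;> simp [h, h.not_gt] <;> ring

end FacetSign

theorem Finset.sum_sum_erase_eq_zero_of_antisymm {α M : Type*} [DecidableEq α] [AddCommGroup M]
    {A : Finset α} {g : α → α → M}
    (hg : ∀ v ∈ A, ∀ w ∈ A, v ≠ w → g v w + g w v = 0) :
    ∑ v ∈ A, ∑ w ∈ A.erase v, g v w = 0 := by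
  rw [sum_sigma']
  refine sum_involution (fun p _ => ⟨p.2, p.1⟩) (fun p hp => ?_) (fun p hp _ => ?_)
    (fun p hp => ?_) (fun p _ => rfl)
  · simp only [mem_sigma, mem_erase] at hp
    exact hg _ hp.1 _ hp.2.2 hp.2.1.symm
  · simp only [mem_sigma, mem_erase] at hp
    exact fun h => hp.2.1 (congrArg Sigma.fst h)
  · simp only [mem_sigma, mem_erase] at hp ⊢
    exact ⟨hp.2.2, hp.2.1.symm, hp.1⟩

section Chains

omit [Fintype V]

omit [LinearOrder V] in
theorem degChains_mono {K L : SimpComplex V} (h : K.faces ⊆ L.faces) (k : ℤ) :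
    degChains 𝕜 K k ≤ degChains 𝕜 L k :=
  fun _ hf s hs => ⟨h (hf s hs).1, (hf s hs).2⟩

theorem degChains_le_sup {K K₁ K₂ : SimpComplex V} (h : K.faces ⊆ K₁.faces ∪ K₂.faces)
    (k : ℤ) :
    degChains 𝕜 K k ≤ degChains 𝕜 K₁ k ⊔ degChains 𝕜 K₂ k := by
  classical
  intro f hf
  set f₁ : Finset V → 𝕜 := fun s => if s ∈ K₁.faces then f s else 0
  refine Submodule.mem_sup.2 ⟨f₁, fun s hs => ?_, f - f₁, fun s hs => ?_, add_sub_cancel f₁ f⟩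
  · by_cases hs₁ : s ∈ K₁.faces
    · simp only [f₁, if_pos hs₁] at hs
      exact ⟨hs₁, (hf s hs).2⟩
    · simp [f₁, if_neg hs₁] at hs
  · by_cases hs₁ : s ∈ K₁.faces
    · simp [f₁, if_pos hs₁] at hs
    · simp only [f₁, if_neg hs₁, Pi.sub_apply, sub_zero] at hs
      obtain ⟨hface, hcard⟩ := hf s hs
      exact ⟨(mem_union.1 (h hface)).resolve_left hs₁, hcard⟩

theorem degChains_inf_le {K₁ K₂ K₃ : SimpComplex V} (h : K₁.faces ∩ K₂.faces ⊆ K₃.faces)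
    (k : ℤ) :
    degChains 𝕜 K₁ k ⊓ degChains 𝕜 K₂ k ≤ degChains 𝕜 K₃ k :=
  fun _ hf s hs => ⟨h (mem_inter.2 ⟨(hf.1 s hs).1, (hf.2 s hs).1⟩), (hf.1 s hs).2⟩

omit [LinearOrder V] in
theorem degChains_eq_bot_of_add_one_neg {K : SimpComplex V} {k : ℤ} (hk : k + 1 < 0) :
    degChains 𝕜 K k = ⊥ :=
  (Submodule.eq_bot_iff _).2 fun f hf => funext fun s => by
    by_contra hs
    have := (hf s hs).2
    omega

end Chains

section Boundary

variable {𝕜}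

theorem bdry_apply_eq_sum_compl (f : Finset V → 𝕜) (t : Finset V) :
    bdry 𝕜 V f t = ∑ v ∈ tᶜ, facetSign 𝕜 t v * f (insert v t) := by
  have hface : ∀ s v, (v ∈ s ∧ s.erase v = t) ↔ (insert v t = s ∧ v ∉ t) := by
    refine fun s v => ⟨?_, ?_⟩
    · rintro ⟨hv, rfl⟩
      exact ⟨insert_erase hv, notMem_erase v s⟩
    · rintro ⟨rfl, hv⟩
      exact ⟨mem_insert_self v t, erase_insert hv⟩
  calc bdry 𝕜 V f t
      = ∑ s, ∑ v, if v ∈ s ∧ s.erase v = t then facetSign 𝕜 s v * f s else 0 := by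
        simp only [bdry, bdryCoeff, LinearMap.coe_mk, AddHom.coe_mk, Int.cast_sum, sum_mul,
          ite_and]
        refine sum_congr rfl fun s _ => ?_
        rw [sum_ite_mem, univ_inter]
        refine sum_congr rfl fun v _ => ?_
        split_ifs <;> simp [facetSign]
    _ = ∑ v, ∑ s, if insert v t = s ∧ v ∉ t then facetSign 𝕜 s v * f s else 0 := by
        rw [sum_comm]
        simp only [hface]
    _ = ∑ v ∈ tᶜ, facetSign 𝕜 t v * f (insert v t) := by
        simp only [ite_and, sum_ite_eq, mem_univ, if_true, facetSign_insert_self]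
        rw [← sum_filter, filter_notMem_eq_sdiff, compl_eq_univ_sdiff]

theorem bdry_mem_degChains {K : SimpComplex V} {k : ℤ} {f : Finset V → 𝕜}
    (hf : f ∈ degChains 𝕜 K k) : bdry 𝕜 V f ∈ degChains 𝕜 K (k - 1) := by
  intro t ht
  rw [bdry_apply_eq_sum_compl] at ht
  obtain ⟨v, hv, hfv⟩ := exists_ne_zero_of_sum_ne_zero ht
  obtain ⟨hface, hcard⟩ := hf _ (right_ne_zero_of_mul hfv)
  rw [card_insert_of_notMem (mem_compl.1 hv)] at hcard
  exact ⟨K.down_closed hface (subset_insert v t), by push_cast at hcard; omega⟩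

theorem bdry_bdry (f : Finset V → 𝕜) : bdry 𝕜 V (bdry 𝕜 V f) = 0 := by
  ext r
  simp only [bdry_apply_eq_sum_compl, mul_sum, compl_insert, Pi.zero_apply]
  refine sum_sum_erase_eq_zero_of_antisymm fun v hv w hw hvw => ?_
  rw [mem_compl] at hv hw
  rw [insert_comm w v, ← mul_assoc, ← mul_assoc, ← add_mul,
    facetSign_mul_facetSign_insert_swap hv hw hvw, neg_add_cancel, zero_mul]

noncomputable def cone (v₀ : V) (f : Finset V → 𝕜) : Finset V → 𝕜 :=
  fun s => if v₀ ∈ s then facetSign 𝕜 s v₀ * f (s.erase v₀) else 0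

theorem bdry_cone_add_cone_bdry (v₀ : V) (f : Finset V → 𝕜) :
    bdry 𝕜 V (cone v₀ f) + cone v₀ (bdry 𝕜 V f) = f := by
  ext t
  rw [Pi.add_apply, bdry_apply_eq_sum_compl]
  by_cases hv₀ : v₀ ∈ t
  · obtain ⟨t, hv₀t, rfl⟩ : ∃ t', v₀ ∉ t' ∧ insert v₀ t' = t :=
      ⟨t.erase v₀, notMem_erase v₀ t, insert_erase hv₀⟩
    have hcompl : tᶜ = insert v₀ (insert v₀ t)ᶜ := by
      rw [compl_insert, insert_erase (mem_compl.2 hv₀t)]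
    have hcancel : ∀ v ∈ (insert v₀ t)ᶜ,
        facetSign 𝕜 (insert v₀ t) v * cone v₀ f (insert v (insert v₀ t)) =
          -(facetSign 𝕜 (insert v₀ t) v₀ * (facetSign 𝕜 t v * f (insert v t))) := by
      intro v hv
      have hvt : v ∉ t := fun h => mem_compl.1 hv (mem_insert_of_mem h)
      have hvv₀ : v ≠ v₀ := fun h => mem_compl.1 hv (h ▸ mem_insert_self v₀ t)
      rw [cone, if_pos (mem_insert_of_mem (mem_insert_self v₀ t)), erase_insert_of_ne hvv₀,
        erase_insert hv₀t, ← mul_assoc, ← mul_assoc,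
        facetSign_insert_mul_facetSign_insert_insert hvt hv₀t hvv₀, neg_mul, mul_assoc]
    rw [sum_congr rfl hcancel, cone, if_pos hv₀, erase_insert hv₀t, bdry_apply_eq_sum_compl,
      hcompl, sum_insert (notMem_compl.2 (mem_insert_self v₀ t)), mul_add, mul_sum,
      sum_neg_distrib, ← mul_assoc, facetSign_insert_self, facetSign_mul_self]
    ring
  · have hcone_bdry : cone v₀ (bdry 𝕜 V f) t = 0 := if_neg hv₀
    rw [hcone_bdry, add_zero, sum_eq_single_of_mem v₀ (mem_compl.2 hv₀)]
    · rw [cone, if_pos (mem_insert_self v₀ t), erase_insert hv₀, facetSign_insert_self,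
        ← mul_assoc, facetSign_mul_self, one_mul]
    · intro v _ hvv₀
      rw [cone, if_neg (by simp [hv₀, hvv₀.symm]), mul_zero]

omit [Fintype V] in
theorem cone_mem_degChains {K : SimpComplex V} {v₀ : V}
    (hK : ∀ s ∈ K.faces, insert v₀ s ∈ K.faces) {k : ℤ} {f : Finset V → 𝕜}
    (hf : f ∈ degChains 𝕜 K k) : cone v₀ f ∈ degChains 𝕜 K (k + 1) := by
  intro s hs
  have hv₀ : v₀ ∈ s := by
    by_contra h
    exact hs (if_neg h)
  rw [cone, if_pos hv₀] at hs
  obtain ⟨hface, hcard⟩ := hf _ (right_ne_zero_of_mul hs)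
  rw [card_erase_of_mem hv₀] at hcard
  have := hK _ hface
  rw [insert_erase hv₀] at this
  refine ⟨this, ?_⟩
  have := card_pos.2 ⟨v₀, hv₀⟩
  omega

end Boundary

theorem cycles_le_boundaries_of_add_one_neg {K : SimpComplex V} {k : ℤ} (hk : k + 1 < 0) :
    cycles 𝕜 K k ≤ boundaries 𝕜 K k := by
  rw [cycles, degChains_eq_bot_of_add_one_neg 𝕜 hk, bot_inf_eq]
  exact bot_le

theorem cycles_le_boundaries_of_cone {K : SimpComplex V} {v₀ : V}
    (hK : ∀ s ∈ K.faces, insert v₀ s ∈ K.faces) (k : ℤ) :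
    cycles 𝕜 K k ≤ boundaries 𝕜 K k := by
  rintro z ⟨hz, hbz : bdry 𝕜 V z = 0⟩
  refine ⟨cone v₀ z, cone_mem_degChains hK hz, ?_⟩
  have := bdry_cone_add_cone_bdry v₀ z
  rwa [hbz, show cone v₀ (0 : Finset V → 𝕜) = 0 by ext; simp [cone], add_zero] at this

theorem cycles_le_boundaries_of_union {K K₁ K₂ K₃ : SimpComplex V}
    (hK : K.faces ⊆ K₁.faces ∪ K₂.faces) (hK₁ : K₁.faces ⊆ K.faces) (hK₂ : K₂.faces ⊆ K.faces)
    (hK₃ : K₃.faces = K₁.faces ∩ K₂.faces) {k : ℤ}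
    (h₁ : cycles 𝕜 K₁ k ≤ boundaries 𝕜 K₁ k) (h₂ : cycles 𝕜 K₂ k ≤ boundaries 𝕜 K₂ k)
    (h₃ : cycles 𝕜 K₃ (k - 1) ≤ boundaries 𝕜 K₃ (k - 1)) :
    cycles 𝕜 K k ≤ boundaries 𝕜 K k := by
  rintro z ⟨hz, hbz : bdry 𝕜 V z = 0⟩
  obtain ⟨a, ha, b, hb, rfl⟩ := Submodule.mem_sup.1 (degChains_le_sup 𝕜 hK k hz)
  -- `∂a = -∂b` is a `(k - 1)`-cycle of `K₃`, say `∂y`; then `a - y` and `b + y` are cycles of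
  -- `K₁` and `K₂`.
  have hab : bdry 𝕜 V b = -bdry 𝕜 V a := eq_neg_of_add_eq_zero_right (by rwa [← map_add])
  have hw : bdry 𝕜 V a ∈ cycles 𝕜 K₃ (k - 1) := by
    refine ⟨degChains_inf_le 𝕜 hK₃.ge _ ⟨bdry_mem_degChains ha, ?_⟩, bdry_bdry a⟩
    simpa [hab] using bdry_mem_degChains hb
  obtain ⟨y, hy, hya⟩ := h₃ hw
  rw [sub_add_cancel] at hy
  have hy₁ := degChains_mono 𝕜 (hK₃.trans_le inter_subset_left) k hy
  have hy₂ := degChains_mono 𝕜 (hK₃.trans_le inter_subset_right) k hy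
  obtain ⟨p, hp, hpa⟩ := h₁ ⟨sub_mem ha hy₁, by simp [LinearMap.mem_ker, hya]⟩
  obtain ⟨q, hq, hqb⟩ := h₂ ⟨add_mem hb hy₂, by simp [LinearMap.mem_ker, hya, hab]⟩
  refine ⟨p + q, add_mem (degChains_mono 𝕜 hK₁ _ hp) (degChains_mono 𝕜 hK₂ _ hq), ?_⟩
  rw [map_add, hpa, hqb]
  abel

theorem betti_eq_zero_of_cycles_le_boundaries {K : SimpComplex V} {k : ℤ}
    (h : cycles 𝕜 K k ≤ boundaries 𝕜 K k) : betti 𝕜 K k = 0 := by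
  rw [betti, Submodule.comap_subtype_eq_top.2 h]
  exact Module.finrank_zero_of_subsingleton

section OnVertexSet

omit [Fintype V]

noncomputable def flagComplexOn (G : SimpleGraph V) (S : Finset V) : SimpComplex V where
  faces := by classical exact {s ∈ S.powerset | G.IsClique (s : Set V)}
  empty_mem := by simp
  down_closed := by
    intro s t hs hts
    simp only [mem_filter, mem_powerset] at hs ⊢
    exact ⟨hts.trans hs.1, hs.2.subset (coe_subset.2 hts)⟩

theorem mem_flagComplexOn_faces {G : SimpleGraph V} {S s : Finset V} :
    s ∈ (flagComplexOn G S).faces ↔ s ⊆ S ∧ G.IsClique (s : Set V) := by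
  simp [flagComplexOn]

theorem flagComplexOn_faces_mono (G : SimpleGraph V) {S T : Finset V} (h : T ⊆ S) :
    (flagComplexOn G T).faces ⊆ (flagComplexOn G S).faces := by
  intro s hs
  rw [mem_flagComplexOn_faces] at hs ⊢
  exact ⟨hs.1.trans h, hs.2⟩

theorem flagComplexOn_faces_subset_union {G : SimpleGraph V} {S : Finset V} {u v : V}
    (huv : u ≠ v) (hadj : ¬ G.Adj u v) :
    (flagComplexOn G S).faces ⊆
      (flagComplexOn G (S.erase u)).faces ∪ (flagComplexOn G (S.erase v)).faces := by
  intro s hs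
  rw [mem_flagComplexOn_faces] at hs
  simp only [mem_union, mem_flagComplexOn_faces, subset_erase]
  by_cases hu : u ∈ s
  · exact Or.inr ⟨⟨hs.1, fun hv => hadj (hs.2 hu hv huv)⟩, hs.2⟩
  · exact Or.inl ⟨⟨hs.1, hu⟩, hs.2⟩

theorem flagComplexOn_faces_erase_inter_erase (G : SimpleGraph V) (S : Finset V) (u v : V) :
    (flagComplexOn G ((S.erase u).erase v)).faces =
      (flagComplexOn G (S.erase u)).faces ∩ (flagComplexOn G (S.erase v)).faces := by
  ext s
  simp only [mem_inter, mem_flagComplexOn_faces, subset_erase]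
  tauto

theorem insert_mem_flagComplexOn_faces {G : SimpleGraph V} {S s : Finset V} {v₀ : V}
    (hS : G.IsClique (S : Set V)) (hv₀ : v₀ ∈ S) (hs : s ∈ (flagComplexOn G S).faces) :
    insert v₀ s ∈ (flagComplexOn G S).faces := by
  rw [mem_flagComplexOn_faces] at hs ⊢
  have hsub : insert v₀ s ⊆ S := insert_subset hv₀ hs.1
  exact ⟨hsub, hS.subset (coe_subset.2 hsub)⟩

noncomputable def nonEdges (G : SimpleGraph V) (S : Finset V) : Finset (Sym2 V) := by
  classical exact {e ∈ S.sym2 | e ∈ Gᶜ.edgeSet}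

theorem mem_nonEdges {G : SimpleGraph V} {S : Finset V} {e : Sym2 V} :
    e ∈ nonEdges G S ↔ e ∈ S.sym2 ∧ e ∈ Gᶜ.edgeSet := by
  simp [nonEdges]

theorem card_nonEdges_lt {G : SimpleGraph V} {S T : Finset V} {u v : V} (hTS : T ⊆ S)
    (hu : u ∈ S) (hv : v ∈ S) (huv : u ≠ v) (hadj : ¬ G.Adj u v) (huT : u ∉ T) :
    #(nonEdges G T) < #(nonEdges G S) := by
  refine card_lt_card ((ssubset_iff_of_subset fun e he => ?_).2 ⟨s(u, v), ?_, ?_⟩)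
  · rw [mem_nonEdges] at he ⊢
    exact ⟨sym2_mono hTS he.1, he.2⟩
  · simp [mem_nonEdges, hu, hv, huv, hadj]
  · simp [mem_nonEdges, huT]

end OnVertexSet

theorem flagComplexOn_univ (G : SimpleGraph V) : flagComplexOn G univ = flagComplex G := by
  unfold flagComplexOn flagComplex
  congr 1

theorem card_nonEdges_univ_add_card_edgeSet (G : SimpleGraph V) :
    #(nonEdges G univ) + Nat.card G.edgeSet = (Fintype.card V).choose 2 := by
  classical
  have hcompl : nonEdges G univ = Gᶜ.edgeFinset := by
    ext e
    simp [mem_nonEdges]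
  rw [hcompl, Nat.card_eq_fintype_card, ← SimpleGraph.edgeFinset_card,
    ← card_union_of_disjoint (SimpleGraph.disjoint_edgeFinset.2 disjoint_compl_left),
    ← SimpleGraph.edgeFinset_sup]
  convert SimpleGraph.card_edgeFinset_top_eq_card_choose_two (V := V) using 3
  exact compl_sup_eq_top

theorem card_nonEdges_univ_add_two_le (G : SimpleGraph V) {k : ℕ}
    (h : (Fintype.card V - 1).choose 2 + k < Nat.card G.edgeSet) :
    #(nonEdges G univ) + k + 2 ≤ Fintype.card V := by
  have hcount := card_nonEdges_univ_add_card_edgeSet G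
  generalize Fintype.card V = n at h hcount ⊢
  obtain _ | n := n
  · simp at hcount h
    omega
  · have hpascal : (n + 1).choose 2 = n.choose 2 + n := by
      rw [Nat.choose_succ_succ' n 1, Nat.choose_one_right, add_comm]
    rw [Nat.add_sub_cancel] at h
    omega

theorem cycles_le_boundaries_flagComplexOn (G : SimpleGraph V) (S : Finset V) (k : ℤ)
    (h : (#(nonEdges G S) : ℤ) + k + 2 ≤ #S) :
    cycles 𝕜 (flagComplexOn G S) k ≤ boundaries 𝕜 (flagComplexOn G S) k := by
  induction S using Finset.strongInduction generalizing k with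
  | H S ih =>
  rcases lt_or_ge (k + 1) 0 with hk | hk
  · exact cycles_le_boundaries_of_add_one_neg 𝕜 hk
  by_cases hS : G.IsClique (S : Set V)
  · obtain ⟨v₀, hv₀⟩ : S.Nonempty := card_pos.1 (by omega)
    exact cycles_le_boundaries_of_cone 𝕜 (fun s => insert_mem_flagComplexOn_faces hS hv₀) k
  obtain ⟨u, hu, v, hv, huv, hadj⟩ : ∃ u ∈ S, ∃ v ∈ S, u ≠ v ∧ ¬ G.Adj u v := by
    simpa [SimpleGraph.IsClique, Set.Pairwise] using hS
  have hvu : v ∈ S.erase u := mem_erase.2 ⟨huv.symm, hv⟩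
  have huuv : u ∉ (S.erase u).erase v := fun h => notMem_erase u S (mem_of_mem_erase h)
  have hSu := card_nonEdges_lt (erase_subset u S) hu hv huv hadj (notMem_erase u S)
  have hSv := card_nonEdges_lt (erase_subset v S) hv hu huv.symm (fun h => hadj h.symm)
    (notMem_erase v S)
  have hSuv := card_nonEdges_lt ((erase_subset v _).trans (erase_subset u S)) hu hv huv hadj huuv
  have hcu := card_erase_of_mem hu
  have hcv := card_erase_of_mem hv
  have hcuv := card_erase_of_mem hvu
  refine cycles_le_boundaries_of_union 𝕜 (flagComplexOn_faces_subset_union huv hadj)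
    (flagComplexOn_faces_mono G (erase_subset u S)) (flagComplexOn_faces_mono G (erase_subset v S))
    (flagComplexOn_faces_erase_inter_erase G S u v) (ih _ (erase_ssubset hu) k ?_)
    (ih _ (erase_ssubset hv) k ?_)
    (ih _ ((erase_subset v _).trans_ssubset (erase_ssubset hu)) (k - 1) ?_) <;> omega

/-- If a graph `G` on `n` vertices has `m > C(n-1, 2) + k` edges, then
`β_k(X(G)) = 0`. -/
theorem betti_flagComplex_eq_zero_of_many_edges
    (𝕜 : Type) [Field 𝕜] {V : Type} [Fintype V] [LinearOrder V]
    (G : SimpleGraph V) (n m k : ℕ)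
    (hn : Fintype.card V = n) (hm : Nat.card G.edgeSet = m)
    (h : Nat.choose (n - 1) 2 + k < m) :
    betti 𝕜 (flagComplex G) k = 0 := by
  subst hn hm
  have hcount : (#(nonEdges G univ) : ℤ) + k + 2 ≤ #(univ : Finset V) := by
    rw [card_univ]
    exact_mod_cast card_nonEdges_univ_add_two_le G h
  rw [← flagComplexOn_univ]
  exact betti_eq_zero_of_cycles_le_boundaries 𝕜
    (cycles_le_boundaries_flagComplexOn 𝕜 G univ k hcount)
end

section
/- Let 𝒢 = {G_i}_{i=1}^m be an edgewise filtration of graphs on a common finite vertex set V. Then there exists a metric d on V such that, if d_1 < d_2 < ⋯ < d_m denote the m smallest pairwise distances between points of V, then for every 1 ≤ i ≤ m the graph whose edges are exactly the pairs {u, w} of distinct vertices with d(u, w) ≤ d_i equals G_i. Consequently, every edgewise filtration of flag complexes is realized as the Vietoris–Rips filtration of a metric on the vertex set. -/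
/-- `G`, restricted to indices `1, …, m`, is an edgewise filtration: increasing, with `G i`
having exactly `i` edges. -/
def IsEdgewiseFiltration {W : Type} (G : ℕ → SimpleGraph W) (m : ℕ) : Prop :=
  (∀ i j : ℕ, 1 ≤ i → i ≤ j → j ≤ m → G i ≤ G j) ∧
  (∀ i : ℕ, 1 ≤ i → i ≤ m → Nat.card (G i).edgeSet = i)

/-- Every edgewise filtration `𝒢 = {G_i}_{i=1}^m` of graphs on a common finite
vertex set `V` is realized as a Vietoris–Rips filtration: there is a metric `d` on `V` such that,
with `δ 1 < ⋯ < δ m` the `m` smallest pairwise distances between distinct points of `V`, the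
graph with edges the pairs at distance at most `δ i` is exactly `G i`, for all `1 ≤ i ≤ m`. -/
theorem edgewise_filtration_realized_by_metric
    {V : Type} [Fintype V] (G : ℕ → SimpleGraph V) (m : ℕ) (hm : 1 ≤ m)
    (hG : IsEdgewiseFiltration G m) :
    ∃ d : V → V → ℝ,
      (∀ x, d x x = 0) ∧ (∀ x y, x ≠ y → 0 < d x y) ∧ (∀ x y, d x y = d y x) ∧
      (∀ x y z, d x z ≤ d x y + d y z) ∧
      ∃ δ : ℕ → ℝ,
        (∀ i, 1 ≤ i → i < m → δ i < δ (i + 1)) ∧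
        (∀ i, 1 ≤ i → i ≤ m → ∃ u w : V, u ≠ w ∧ d u w = δ i) ∧
        (∀ u w : V, u ≠ w → d u w ≤ δ m → ∃ i, 1 ≤ i ∧ i ≤ m ∧ d u w = δ i) ∧
        (∀ i, 1 ≤ i → i ≤ m → ∀ u w : V, (G i).Adj u w ↔ (u ≠ w ∧ d u w ≤ δ i)) := by
  classical
  obtain ⟨hmono, hcard⟩ := hG
  set S : V → V → Set ℕ := fun u w => {i | 1 ≤ i ∧ i ≤ m ∧ (G i).Adj u w} with hS
  set rk : V → V → ℕ := fun u w => sInf (S u w) with hrk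
  have hSsymm : ∀ u w, S u w = S w u := by
    intro u w
    ext i; simp only [hS, Set.mem_setOf_eq]
    constructor <;> rintro ⟨h1, h2, h3⟩ <;> exact ⟨h1, h2, h3.symm⟩
  have hrksymm : ∀ u w, rk u w = rk w u := by
    intro u w; simp only [hrk]; rw [hSsymm]
  have hmem : ∀ u w, (G m).Adj u w → rk u w ∈ S u w := by
    intro u w h
    exact Nat.sInf_mem ⟨m, ⟨hm, le_refl m, h⟩⟩
  have hm1 : (0:ℝ) < (m:ℝ) + 1 := by positivity
  set d : V → V → ℝ := fun u w =>
    if u = w then 0 else if (G m).Adj u w then 2 + (rk u w : ℝ) / ((m:ℝ)+1) else 3 with hd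
  set δ : ℕ → ℝ := fun i => 2 + (i:ℝ) / ((m:ℝ)+1) with hδ
  have hδlt3 : ∀ i : ℕ, i ≤ m → δ i < 3 := by
    intro i hi
    have : (i:ℝ) / ((m:ℝ)+1) < 1 := by
      rw [div_lt_one hm1]
      have : (i:ℝ) ≤ (m:ℝ) := by exact_mod_cast hi
      linarith
    simp only [hδ]; linarith
  have hdlow : ∀ u w, u ≠ w → 2 ≤ d u w := by
    intro u w h
    simp only [hd, if_neg h]
    split
    · have : (0:ℝ) ≤ (rk u w : ℝ) / ((m:ℝ)+1) := by positivity
      linarith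
    · norm_num
  have hdhigh : ∀ u w, d u w ≤ 3 := by
    intro u w
    simp only [hd]
    split
    · norm_num
    split
    · rename_i h _
      obtain ⟨h1, h2, -⟩ := hmem u w (by assumption)
      have : (rk u w : ℝ) / ((m:ℝ)+1) < 1 := by
        rw [div_lt_one hm1]
        have : (rk u w : ℝ) ≤ (m:ℝ) := by exact_mod_cast h2
        linarith
      linarith
    · norm_num
  have hdeq : ∀ u w, u ≠ w → (G m).Adj u w → d u w = δ (rk u w) := by
    intro u w h hA
    simp only [hd, hδ, if_neg h, if_pos hA]
  -- main adjacency characterization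
  have hiff : ∀ i, 1 ≤ i → i ≤ m → ∀ u w : V, (G i).Adj u w ↔ (u ≠ w ∧ d u w ≤ δ i) := by
    intro i h1 h2 u w
    constructor
    · intro hA
      have hne := hA.ne
      have hAm : (G m).Adj u w := hmono i m h1 h2 le_rfl hA
      refine ⟨hne, ?_⟩
      rw [hdeq u w hne hAm]
      have hle : rk u w ≤ i := Nat.sInf_le ⟨h1, h2, hA⟩
      simp only [hδ]
      have : (rk u w : ℝ) ≤ (i : ℝ) := by exact_mod_cast hle
      have := (div_le_div_iff_of_pos_right hm1).mpr this
      linarith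
    · rintro ⟨hne, hle⟩
      have hAm : (G m).Adj u w := by
        by_contra hA
        have : d u w = 3 := by simp only [hd, if_neg hne, if_neg hA]
        have := hδlt3 i h2
        linarith
      obtain ⟨hr1, hr2, hr3⟩ := hmem u w hAm
      rw [hdeq u w hne hAm] at hle
      have : (rk u w : ℝ) ≤ (i : ℝ) := by
        simp only [hδ] at hle
        exact (div_le_div_iff_of_pos_right hm1).mp (by linarith : (rk u w : ℝ)/((m:ℝ)+1) ≤ (i:ℝ)/((m:ℝ)+1))
      have hri : rk u w ≤ i := by exact_mod_cast this
      exact hmono (rk u w) i hr1 hri h2 hr3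
  refine ⟨d, ?_, ?_, ?_, ?_, δ, ?_, ?_, ?_, hiff⟩
  · intro x; simp [hd]
  · intro x y h
    have := hdlow x y h; linarith
  · intro x y
    by_cases h : x = y
    · subst h; rfl
    · simp only [hd, if_neg h, if_neg (Ne.symm h)]
      rw [hrksymm]
      congr 1
      exact propext ⟨fun a => a.symm, fun a => a.symm⟩
  · intro x y z
    by_cases hxz : x = z
    · subst hxz
      simp only [hd, if_pos rfl]
      by_cases hxy : x = y
      · subst hxy; simp
      · have := hdlow x y hxy
        have := hdlow y x (Ne.symm hxy)
        linarith
    by_cases hxy : x = y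
    · subst hxy; simp [hd, if_pos rfl]
    by_cases hyz : y = z
    · subst hyz; simp [hd, if_pos rfl]
    · have := hdhigh x z
      have := hdlow x y hxy
      have := hdlow y z hyz
      linarith
  · -- strict monotonicity of δ
    intro i _ _
    simp only [hδ]
    have h1 : (i:ℝ) < ((i+1:ℕ):ℝ) := by exact_mod_cast Nat.lt_succ_self i
    have := (div_lt_div_iff_of_pos_right hm1).mpr h1
    linarith
  · -- each δ i realized
    intro i h1 h2
    have key : ∃ u w : V, (G i).Adj u w ∧ ∀ j, 1 ≤ j → j < i → ¬ (G j).Adj u w := by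
      by_cases hi1 : i = 1
      · subst hi1
        have hc1 := hcard 1 le_rfl hm
        have hne : (G 1).edgeSet.Nonempty := by
          rw [Set.nonempty_iff_ne_empty]
          intro h
          rw [h] at hc1
          simp at hc1
        obtain ⟨e, he⟩ := hne
        induction e using Sym2.ind with
        | _ u w =>
          rw [SimpleGraph.mem_edgeSet] at he
          exact ⟨u, w, he, fun j hj1 hj2 => by omega⟩
      · set k := i - 1 with hkdef
        have hk1 : 1 ≤ k := by omega
        have hkm : k ≤ m := by omega
        have hki : k ≤ i := by omega
        have hci := hcard i h1 h2
        have hck := hcard k hk1 hkm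
        have hsub : (G k).edgeSet ⊆ (G i).edgeSet :=
          SimpleGraph.edgeSet_mono (hmono k i hk1 hki h2)
        have hex : ∃ u w : V, (G i).Adj u w ∧ ¬ (G k).Adj u w := by
          by_contra hno
          push_neg at hno
          have heq : (G k).edgeSet = (G i).edgeSet := by
            apply hsub.antisymm
            intro e
            induction e using Sym2.ind with
            | _ u w =>
              intro he
              rw [SimpleGraph.mem_edgeSet] at he ⊢
              exact hno u w he
          rw [heq, hci] at hck
          omega
        obtain ⟨u, w, hA, hnA⟩ := hex
        refine ⟨u, w, hA, fun j hj1 hj2 => fun hAj => ?_⟩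
        exact hnA (hmono j k hj1 (by omega) hkm hAj)
    obtain ⟨u, w, hA, hnone⟩ := key
    have hAm : (G m).Adj u w := hmono i m h1 h2 le_rfl hA
    have hrkle : rk u w ≤ i := Nat.sInf_le ⟨h1, h2, hA⟩
    obtain ⟨hr1, hr2, hr3⟩ := hmem u w hAm
    have hrkeq : rk u w = i := by
      rcases lt_or_ge (rk u w) i with h | h
      · exact absurd hr3 (hnone _ hr1 h)
      · omega
    exact ⟨u, w, hA.ne, by rw [hdeq u w hA.ne hAm, hrkeq]⟩
  · -- every small distance is some δ i
    intro u w hne hle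
    have hAm : (G m).Adj u w := by
      by_contra hA
      have : d u w = 3 := by simp only [hd, if_neg hne, if_neg hA]
      have := hδlt3 m le_rfl
      linarith
    obtain ⟨hr1, hr2, -⟩ := hmem u w hAm
    exact ⟨rk u w, hr1, hr2, hdeq u w hne hAm⟩
end
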